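/- arXiv:1804.02095 — 6 statements merged into one kernel-verified Lean document; each statement's English description precedes it below -/
import Mathlib

section
/- Let ψ : ℝ → ℂ^d be differentiable with ‖ψ(t)‖ = 1 for all t, let P(t) = ψ(t) ψ(t)* (an orthogonal projection), and assume P is differentiable. Let c : ℝ → ℂ be differentiable with |c(t)| = 1 for all t, and set φ(t) = c(t) ψ(t). Then ‖φ̇(t)‖² = ‖P(t) φ̇(t)‖² + ‖Ṗ(t) ψ(t)‖²; in particular ‖φ̇(t)‖² ≥ ‖Ṗ(t) ψ(t)‖², where the right-hand side is independent of the gauge c, and equality holds at time t if and only if P(t) φ̇(t) = 0. -/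
open scoped Matrix InnerProductSpace
open Matrix

/-!
Differentiating `⟪ψ, ψ⟫ = 1` gives `⟪ψ', ψ⟫ = -⟪ψ, ψ'⟫`, so the rank-one formula `(u v*) x = ⟪v, x⟫ u`
yields `Ṗ ψ = ψ' - ⟪ψ, ψ'⟫ ψ`, the component of `ψ'` orthogonal to `ψ`. The component of
`φ̇ = c' ψ + c ψ'` orthogonal to `ψ` is `c` times it, hence has the same norm since `|c| = 1`,
and the identity is Pythagoras for `φ̇ = P φ̇ + (1 - P) φ̇`.
-/

theorem Matrix.toEuclideanLin_vecMulVec_star {𝕜 ι : Type*} [RCLike 𝕜] [Fintype ι] [DecidableEq ι]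
    (u v x : EuclideanSpace 𝕜 ι) :
    toEuclideanLin (vecMulVec u (star (v : ι → 𝕜))) x = ⟪v, x⟫_𝕜 • u := by
  ext i
  simp [mulVec, vecMulVec, dotProduct, PiLp.inner_apply, RCLike.inner_apply, Finset.mul_sum,
    mul_comm, mul_left_comm]

section InnerProductSpace

variable {𝕜 E : Type*} [RCLike 𝕜] [NormedAddCommGroup E] [InnerProductSpace 𝕜 E]

theorem norm_sq_eq_norm_sq_inner_smul_add_norm_sq_sub {ψ : E} (hψ : ‖ψ‖ = 1) (x : E) :
    ‖x‖ ^ 2 = ‖⟪ψ, x⟫_𝕜 • ψ‖ ^ 2 + ‖x - ⟪ψ, x⟫_𝕜 • ψ‖ ^ 2 := by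
  have horth : ⟪⟪ψ, x⟫_𝕜 • ψ, x - ⟪ψ, x⟫_𝕜 • ψ⟫_𝕜 = 0 := by
    rw [inner_smul_left, inner_sub_right, inner_smul_right, inner_self_eq_one_of_norm_eq_one hψ]
    ring
  simpa only [add_sub_cancel, sq] using
    norm_add_sq_eq_norm_sq_add_norm_sq_of_inner_eq_zero _ _ horth

theorem smul_add_smul_sub_inner_smul {ψ : E} (hψ : ‖ψ‖ = 1) (ψ' : E) (c c' : 𝕜) :
    (c' • ψ + c • ψ') - ⟪ψ, c' • ψ + c • ψ'⟫_𝕜 • ψ = c • (ψ' - ⟪ψ, ψ'⟫_𝕜 • ψ) := by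
  rw [inner_add_right, inner_smul_right, inner_smul_right, inner_self_eq_one_of_norm_eq_one hψ]
  module

theorem inner_add_inner_eq_zero_of_norm_const [NormedSpace ℝ E] {ψ : ℝ → E} {ψ' : E} {t r : ℝ}
    (hψ : HasDerivAt ψ ψ' t) (hnorm : ∀ s, ‖ψ s‖ = r) :
    ⟪ψ t, ψ'⟫_𝕜 + ⟪ψ', ψ t⟫_𝕜 = 0 := by
  have hconst : (fun s => ⟪ψ s, ψ s⟫_𝕜) = fun _ => (r : 𝕜) ^ 2 := by
    funext s; rw [inner_self_eq_norm_sq_to_K, hnorm]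
  have hderiv := hψ.inner 𝕜 hψ
  rw [hconst] at hderiv
  exact hderiv.unique (hasDerivAt_const t _)

end InnerProductSpace

theorem stmt_3_general {d : ℕ} (ψ ψ' : ℝ → EuclideanSpace ℂ (Fin d)) (c c' : ℝ → ℂ)
    (hψ : ∀ t, HasDerivAt ψ (ψ' t) t)
    (hnorm : ∀ t, ‖ψ t‖ = 1)
    (hcu : ∀ t, ‖c t‖ = 1) :
    ∀ t : ℝ,
      let P : Matrix (Fin d) (Fin d) ℂ := vecMulVec (ψ t) (star (ψ t : ∀ _ : Fin d, ℂ))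
      let Pdot : Matrix (Fin d) (Fin d) ℂ :=
        vecMulVec (ψ' t) (star (ψ t : ∀ _ : Fin d, ℂ))
          + vecMulVec (ψ t) (star (ψ' t : ∀ _ : Fin d, ℂ))
      let φdot : EuclideanSpace ℂ (Fin d) := c' t • ψ t + c t • ψ' t
      ‖φdot‖ ^ 2 = ‖toEuclideanLin P φdot‖ ^ 2 + ‖toEuclideanLin Pdot (ψ t)‖ ^ 2 ∧
      ‖toEuclideanLin Pdot (ψ t)‖ ^ 2 ≤ ‖φdot‖ ^ 2 ∧
      (‖φdot‖ ^ 2 = ‖toEuclideanLin Pdot (ψ t)‖ ^ 2 ↔ toEuclideanLin P φdot = 0) := by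
  intro t P Pdot φdot
  have hPφ : toEuclideanLin P φdot = ⟪ψ t, φdot⟫_ℂ • ψ t := toEuclideanLin_vecMulVec_star _ _ _
  have hPdotψ : toEuclideanLin Pdot (ψ t) = ψ' t - ⟪ψ t, ψ' t⟫_ℂ • ψ t := by
    rw [map_add, LinearMap.add_apply, toEuclideanLin_vecMulVec_star,
      toEuclideanLin_vecMulVec_star, inner_self_eq_one_of_norm_eq_one (hnorm t),
      eq_neg_of_add_eq_zero_right (inner_add_inner_eq_zero_of_norm_const (𝕜 := ℂ) (hψ t) hnorm)]
    module
  have hpyth : ‖φdot‖ ^ 2 = ‖toEuclideanLin P φdot‖ ^ 2 + ‖toEuclideanLin Pdot (ψ t)‖ ^ 2 := by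
    rw [hPφ, hPdotψ, ← one_mul ‖_ - _‖, ← hcu t, ← norm_smul,
      ← smul_add_smul_sub_inner_smul (hnorm t)]
    exact norm_sq_eq_norm_sq_inner_smul_add_norm_sq_sub (hnorm t) _
  refine ⟨hpyth, hpyth ▸ le_add_of_nonneg_left (sq_nonneg _), ?_⟩
  rw [hpyth, add_eq_right, sq_eq_zero_iff, norm_eq_zero]

/-- Gauge optimality: for `φ = c ψ` with `|c| = 1` and `P = ψψ*`,
`‖φ̇‖² = ‖P φ̇‖² + ‖Ṗ ψ‖² ≥ ‖Ṗ ψ‖²`, with equality iff `P φ̇ = 0`. -/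
theorem stmt_3 {d : ℕ} (ψ ψ' : ℝ → EuclideanSpace ℂ (Fin d)) (c c' : ℝ → ℂ)
    (hψ : ∀ t, HasDerivAt ψ (ψ' t) t)
    (hnorm : ∀ t, ‖ψ t‖ = 1)
    (hc : ∀ t, HasDerivAt c (c' t) t)
    (hcu : ∀ t, ‖c t‖ = 1) :
    ∀ t : ℝ,
      let P : Matrix (Fin d) (Fin d) ℂ := vecMulVec (ψ t) (star (ψ t : ∀ _ : Fin d, ℂ))
      let Pdot : Matrix (Fin d) (Fin d) ℂ :=
        vecMulVec (ψ' t) (star (ψ t : ∀ _ : Fin d, ℂ))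
          + vecMulVec (ψ t) (star (ψ' t : ∀ _ : Fin d, ℂ))
      let φdot : EuclideanSpace ℂ (Fin d) := c' t • ψ t + c t • ψ' t
      ‖φdot‖ ^ 2 = ‖toEuclideanLin P φdot‖ ^ 2 + ‖toEuclideanLin Pdot (ψ t)‖ ^ 2 ∧
      ‖toEuclideanLin Pdot (ψ t)‖ ^ 2 ≤ ‖φdot‖ ^ 2 ∧
      (‖φdot‖ ^ 2 = ‖toEuclideanLin Pdot (ψ t)‖ ^ 2 ↔ toEuclideanLin P φdot = 0) :=
  stmt_3_general ψ ψ' c c' hψ hnorm hcu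
end

section
/- Let ε > 0 and let P : ℝ → Matrix (Fin d) (Fin d) ℂ be a continuously differentiable family of Hermitian projectors (P(t)² = P(t), P(t)* = P(t)). Define 𝒜(t) = iε [Ṗ(t), P(t)] and let 𝒯 solve iε ∂ₜ𝒯(t) = 𝒜(t) 𝒯(t) with 𝒯(0) = I. Then P(t) 𝒯(t) = 𝒯(t) P(0) for all t. -/
/-!
Differentiating `P² = P` gives `ṖP + PṖ = Ṗ`, hence `PṖP = 0`, and with `A = ṖP - PṖ` this yields
`Ṗ + PA = AP`. Consequently `F(t) = P(t) 𝒯(t) - 𝒯(t) P(0)` solves the linear equation `Ḟ = AF`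
with `F(0) = 0`, so `F` vanishes identically by uniqueness of solutions of linear ODEs.
-/

open scoped Matrix Matrix.Norms.L2Operator
open Set

theorem eq_zero_of_hasDerivAt_mul_self {R : Type*} [NormedRing R] [NormedSpace ℝ R]
    {B f : ℝ → R} (hB : Continuous B) (hf : ∀ t, HasDerivAt f (B t * f t) t) {t₀ : ℝ}
    (h₀ : f t₀ = 0) : f = 0 := by
  ext t
  obtain ⟨a, b, ht, ht₀⟩ : ∃ a b, t ∈ Ioo a b ∧ t₀ ∈ Ioo a b :=
    ⟨min t t₀ - 1, max t t₀ + 1, by grind, by grind⟩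
  obtain ⟨K, hK⟩ := ((isCompact_Icc (a := a) (b := b)).image hB.nnnorm).bddAbove
  refine ODE_solution_unique_of_mem_Ioo (v := fun s x => B s * x) (s := fun _ => univ) (K := K)
    (fun s hs => ((lipschitzWith_smul (B s)).weaken
      (hK ⟨s, Ioo_subset_Icc_self hs, rfl⟩)).lipschitzOnWith) ht₀
    (fun s _ => ⟨hf s, trivial⟩) (fun s _ => ⟨by simp, trivial⟩) h₀ ht

theorem HasDerivAt.mul_add_mul_eq_of_isIdempotentElem {R : Type*} [NormedRing R]
    [NormedAlgebra ℝ R] {P : ℝ → R} {P' : R} {t : ℝ} (hP : HasDerivAt P P' t)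
    (hidem : ∀ s, IsIdempotentElem (P s)) :
    P' * P t + P t * P' = P' := by
  have hPP : HasDerivAt (fun s => P s * P s) P' t := by
    simpa only [funext hidem] using hP
  exact (hP.mul hP).unique hPP

theorem IsIdempotentElem.add_mul_commutator {R : Type*} [Ring R] {p q : R}
    (hp : IsIdempotentElem p) (hq : q * p + p * q = q) :
    q + p * (q * p - p * q) = (q * p - p * q) * p := by
  have hpqp : p * q * p = 0 := by
    have := congrArg (p * ·) hq
    simp only [mul_add, ← mul_assoc, hp.eq] at this
    simpa using this
  have hqp : q * p = q - p * q := eq_sub_of_add_eq hq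
  calc q + p * (q * p - p * q) = q - p * q := by
        rw [mul_sub, ← mul_assoc, hpqp, ← mul_assoc, hp.eq]; abel
    _ = (q * p - p * q) * p := by rw [sub_mul, mul_assoc, hp.eq, hpqp, sub_zero, hqp]

theorem parallelTransport_intertwines {R : Type*} [NormedRing R] [NormedAlgebra ℝ R]
    {P P' U : ℝ → R} (hP : ∀ t, HasDerivAt P (P' t) t) (hP' : Continuous P')
    (hidem : ∀ t, IsIdempotentElem (P t))
    (hU : ∀ t, HasDerivAt U ((P' t * P t - P t * P' t) * U t) t) (h₀ : Commute (P 0) (U 0))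
    (t : ℝ) :
    P t * U t = U t * P 0 := by
  set A := fun t => P' t * P t - P t * P' t
  have hA : Continuous A :=
    have hPc : Continuous P := continuous_iff_continuousAt.2 fun t => (hP t).continuousAt
    (hP'.mul hPc).sub (hPc.mul hP')
  have hf : ∀ t, HasDerivAt (fun t => P t * U t - U t * P 0)
      (A t * (P t * U t - U t * P 0)) t := by
    intro t
    have key : P' t + P t * A t = A t * P t :=
      (hidem t).add_mul_commutator ((hP t).mul_add_mul_eq_of_isIdempotentElem hidem)
    refine (((hP t).fun_mul (hU t)).sub ((hU t).mul_const (P 0))).congr_deriv ?_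
    calc P' t * U t + P t * (A t * U t) - A t * U t * P 0
        = (P' t + P t * A t) * U t - A t * U t * P 0 := by noncomm_ring
      _ = A t * P t * U t - A t * U t * P 0 := by rw [key]
      _ = A t * (P t * U t - U t * P 0) := by noncomm_ring
  exact sub_eq_zero.1 <| congrFun (eq_zero_of_hasDerivAt_mul_self hA hf (sub_eq_zero.2 h₀.eq)) t

theorem stmt_5_general {d : ℕ} (ε : ℝ) (hε : 0 < ε)
    (P P' : ℝ → Matrix (Fin d) (Fin d) ℂ)
    (hP : ∀ t, HasDerivAt P (P' t) t)
    (hP'c : Continuous P')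
    (hproj : ∀ t, P t * P t = P t)
    (U U' : ℝ → Matrix (Fin d) (Fin d) ℂ)
    (hderiv : ∀ t, HasDerivAt U (U' t) t)
    (hODE : ∀ t, (Complex.I * ε) • U' t =
      ((Complex.I * ε) • (P' t * P t - P t * P' t)) * U t)
    (hinit : U 0 = 1) :
    ∀ t : ℝ, P t * U t = U t * P 0 := by
  have hIε : (Complex.I * ε : ℂ) ≠ 0 := mul_ne_zero Complex.I_ne_zero (by exact_mod_cast hε.ne')
  have hU : ∀ t, HasDerivAt U ((P' t * P t - P t * P' t) * U t) t := fun t =>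
    (hderiv t).congr_deriv <| smul_right_injective _ hIε <| (hODE t).trans (smul_mul_assoc _ _ _)
  exact parallelTransport_intertwines hP hP'c hproj hU (hinit ▸ Commute.one_right _)

/-- Intertwining property of the parallel transport evolution operator:
if `𝒜(t) = iε [Ṗ(t), P(t)]` and `iε ∂ₜ𝒯 = 𝒜 𝒯`, `𝒯(0) = I`, then `P(t) 𝒯(t) = 𝒯(t) P(0)`. -/
theorem stmt_5 {d : ℕ} (ε : ℝ) (hε : 0 < ε)
    (P P' : ℝ → Matrix (Fin d) (Fin d) ℂ)
    (hP : ∀ t, HasDerivAt P (P' t) t)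
    (hP'c : Continuous P')
    (hproj : ∀ t, P t * P t = P t)
    (hherm : ∀ t, (P t)ᴴ = P t)
    (U U' : ℝ → Matrix (Fin d) (Fin d) ℂ)
    (hderiv : ∀ t, HasDerivAt U (U' t) t)
    (hODE : ∀ t, (Complex.I * ε) • U' t =
      ((Complex.I * ε) • (P' t * P t - P t * P' t)) * U t)
    (hinit : U 0 = 1) :
    ∀ t : ℝ, P t * U t = U t * P 0 :=
  stmt_5_general ε hε P P' hP hP'c hproj U U' hderiv hODE hinit
end

section
/- Let ε > 0 and let H : ℝ → Matrix (Fin d) (Fin d) ℝ be a continuous family of real symmetric matrices. Suppose (q(t), p(t)) ∈ ℝ^d × ℝ^d solves the Hamiltonian system ∂ₜq = (1/ε)[H(t)p(2 − qᵀq − pᵀp) − (qᵀH(t)q + pᵀH(t)p)p], ∂ₜp = (1/ε)[−H(t)q(2 − qᵀq − pᵀp) + (qᵀH(t)q + pᵀH(t)p)q], with normalized initial condition q(0)ᵀq(0) + p(0)ᵀp(0) = 1. Then q(t)ᵀq(t) + p(t)ᵀp(t) = 1 for all t, and φ(t) := q(t) + i p(t) solves the parallel transport dynamics iε ∂ₜφ(t)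 = H(t) φ(t) − φ(t)(φ(t)* H(t) φ(t)). -/
/-!
The Hamiltonian vector field is tangent to the spheres `qᵀq + pᵀp = c` because `H` is symmetric,
so the normalization is conserved. On the unit sphere the factor `2 - qᵀq - pᵀp` equals `1`.
Under `(q, p) ↦ q + i p` multiplication by `i` becomes `(q, p) ↦ (-p, q)`, and
`⟪φ, Hφ⟫ = qᵀHq + pᵀHp` is real, so `i` times the field is exactly `Hφ - φ ⟪φ, Hφ⟫`.
-/

open scoped InnerProductSpace
open Matrix

variable {n : Type*} [Fintype n]

namespace EuclideanSpace

noncomputable def complexify :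
    EuclideanSpace ℝ n × EuclideanSpace ℝ n →L[ℝ] EuclideanSpace ℂ n :=
  LinearMap.toContinuousLinearMap
  { toFun := fun x => WithLp.toLp 2 (fun i => (x.1 i : ℂ) + Complex.I * (x.2 i : ℂ))
    map_add' := fun x y => by
      ext i
      simp only [PiLp.add_apply, Prod.fst_add, Prod.snd_add]
      push_cast
      ring
    map_smul' := fun c x => by
      ext i
      simp only [PiLp.smul_apply, Prod.smul_fst, Prod.smul_snd, smul_eq_mul, RingHom.id_apply,
        Complex.real_smul]
      push_cast
      ring }

@[simp]
theorem complexify_apply (x : EuclideanSpace ℝ n × EuclideanSpace ℝ n) (i : n) :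
    complexify x i = (x.1 i : ℂ) + Complex.I * (x.2 i : ℂ) := rfl

theorem I_smul_complexify (x y : EuclideanSpace ℝ n) :
    Complex.I • complexify (x, y) = complexify (-y, x) := by
  ext i
  simp only [PiLp.smul_apply, complexify_apply, smul_eq_mul, PiLp.neg_apply, Complex.ofReal_neg]
  ring_nf
  rw [Complex.I_sq]
  ring

theorem inner_complexify (a b u v : EuclideanSpace ℝ n) :
    ⟪complexify (a, b), complexify (u, v)⟫_ℂ =
      ((⟪a, u⟫_ℝ + ⟪b, v⟫_ℝ : ℝ) : ℂ) + Complex.I * ((⟪a, v⟫_ℝ - ⟪b, u⟫_ℝ : ℝ) : ℂ) := by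
  simp only [PiLp.inner_apply, RCLike.inner_apply, RCLike.conj_to_real, complexify_apply]
  push_cast
  simp only [Finset.mul_sum, ← Finset.sum_add_distrib, ← Finset.sum_sub_distrib]
  refine Finset.sum_congr rfl fun i _ => ?_
  simp only [map_add, map_mul, Complex.conj_ofReal, Complex.conj_I]
  ring_nf
  rw [Complex.I_sq]
  ring

theorem toEuclideanLin_map_ofReal_complexify [DecidableEq n] (A : Matrix n n ℝ) (x y : EuclideanSpace ℝ n) :
    toEuclideanLin (A.map ((↑) : ℝ → ℂ)) (complexify (x, y)) =
      complexify (toEuclideanLin A x, toEuclideanLin A y) := by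
  ext i
  simp only [toLpLin_apply, mulVec, dotProduct, map_apply, complexify_apply, Complex.ofReal_sum,
    Complex.ofReal_mul, Finset.mul_sum, ← Finset.sum_add_distrib]
  refine Finset.sum_congr rfl fun j _ => ?_
  ring

end EuclideanSpace

open EuclideanSpace

variable [DecidableEq n]

theorem Matrix.IsSymm.inner_toEuclideanLin_comm {A : Matrix n n ℝ} (hA : A.IsSymm)
    (x y : EuclideanSpace ℝ n) :
    ⟪x, toEuclideanLin A y⟫_ℝ = ⟪y, toEuclideanLin A x⟫_ℝ := by
  rw [← (isSymmetric_toEuclideanLin_iff.mpr (isHermitian_iff_isSymm.mpr hA)) y x, real_inner_comm]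

/-- `ε • (∂ₜq, ∂ₜp) = ptHamiltonianField H q p` is the Hamiltonian system generated by `ℰ`. -/
noncomputable def ptHamiltonianField (A : Matrix n n ℝ) (q p : EuclideanSpace ℝ n) :
    EuclideanSpace ℝ n × EuclideanSpace ℝ n :=
  ((2 - ⟪q, q⟫_ℝ - ⟪p, p⟫_ℝ) • toEuclideanLin A p
      - (⟪q, toEuclideanLin A q⟫_ℝ + ⟪p, toEuclideanLin A p⟫_ℝ) • p,
    -((2 - ⟪q, q⟫_ℝ - ⟪p, p⟫_ℝ) • toEuclideanLin A q)
      + (⟪q, toEuclideanLin A q⟫_ℝ + ⟪p, toEuclideanLin A p⟫_ℝ) • q)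

theorem inner_ptHamiltonianField {A : Matrix n n ℝ} (hA : A.IsSymm) (q p : EuclideanSpace ℝ n) :
    ⟪q, (ptHamiltonianField A q p).1⟫_ℝ + ⟪p, (ptHamiltonianField A q p).2⟫_ℝ = 0 := by
  simp only [ptHamiltonianField, inner_sub_right, inner_add_right, inner_neg_right,
    real_inner_smul_right, hA.inner_toEuclideanLin_comm q p, real_inner_comm q p]
  ring

theorem inner_self_add_inner_self_eq_of_hamiltonian {ε : ℝ} (hε : ε ≠ 0)
    {H : ℝ → Matrix n n ℝ} (hsym : ∀ t, (H t).IsSymm) {q p q' p' : ℝ → EuclideanSpace ℝ n}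
    (hq : ∀ t, HasDerivAt q (q' t) t) (hp : ∀ t, HasDerivAt p (p' t) t)
    (heq : ∀ t, ε • (q' t, p' t) = ptHamiltonianField (H t) (q t) (p t)) (t : ℝ) :
    ⟪q t, q t⟫_ℝ + ⟪p t, p t⟫_ℝ = ⟪q 0, q 0⟫_ℝ + ⟪p 0, p 0⟫_ℝ := by
  have hderiv : ∀ s, HasDerivAt (fun s => ⟪q s, q s⟫_ℝ + ⟪p s, p s⟫_ℝ) 0 s := by
    intro s
    have htangent : ⟪q s, q' s⟫_ℝ + ⟪p s, p' s⟫_ℝ = 0 := by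
      have h := inner_ptHamiltonianField (hsym s) (q s) (p s)
      rw [← heq s, Prod.smul_fst, Prod.smul_snd, real_inner_smul_right, real_inner_smul_right,
        ← mul_add] at h
      exact (mul_eq_zero.mp h).resolve_left hε
    refine (((hq s).inner ℝ (hq s)).add ((hp s).inner ℝ (hp s))).congr_deriv ?_
    rw [real_inner_comm (q s), real_inner_comm (p s)]
    linarith
  exact is_const_of_deriv_eq_zero (fun s => (hderiv s).differentiableAt)
    (fun s => (hderiv s).deriv) t 0

theorem inner_complexify_toEuclideanLin_map_ofReal {A : Matrix n n ℝ} (hA : A.IsSymm)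
    (q p : EuclideanSpace ℝ n) :
    ⟪complexify (q, p), toEuclideanLin (A.map ((↑) : ℝ → ℂ)) (complexify (q, p))⟫_ℂ =
      ((⟪q, toEuclideanLin A q⟫_ℝ + ⟪p, toEuclideanLin A p⟫_ℝ : ℝ) : ℂ) := by
  rw [toEuclideanLin_map_ofReal_complexify, inner_complexify, hA.inner_toEuclideanLin_comm q p,
    sub_self, Complex.ofReal_zero, mul_zero, add_zero]

theorem I_smul_complexify_ptHamiltonianField {A : Matrix n n ℝ} (hA : A.IsSymm)
    {q p : EuclideanSpace ℝ n} (hqp : ⟪q, q⟫_ℝ + ⟪p, p⟫_ℝ = 1) :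
    Complex.I • complexify (ptHamiltonianField A q p) =
      toEuclideanLin (A.map ((↑) : ℝ → ℂ)) (complexify (q, p))
        - ⟪complexify (q, p), toEuclideanLin (A.map ((↑) : ℝ → ℂ)) (complexify (q, p))⟫_ℂ •
          complexify (q, p) := by
  have hs : 2 - ⟪q, q⟫_ℝ - ⟪p, p⟫_ℝ = 1 := by linarith
  rw [ptHamiltonianField, hs, one_smul, one_smul, I_smul_complexify,
    inner_complexify_toEuclideanLin_map_ofReal hA, toEuclideanLin_map_ofReal_complexify,
    Complex.coe_smul, ← map_smul, ← map_sub, Prod.smul_mk, Prod.mk_sub_mk, neg_add, neg_neg,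
    ← sub_eq_add_neg]

theorem stmt_8_general {d : ℕ} (ε : ℝ) (hε : 0 < ε)
    (H : ℝ → Matrix (Fin d) (Fin d) ℝ)
    (hsym : ∀ t, (H t).IsSymm)
    (q p q' p' : ℝ → EuclideanSpace ℝ (Fin d))
    (hq : ∀ t, HasDerivAt q (q' t) t)
    (hp : ∀ t, HasDerivAt p (p' t) t)
    (heq1 : ∀ t, ε • q' t =
      (2 - ⟪q t, q t⟫_ℝ - ⟪p t, p t⟫_ℝ) • toEuclideanLin (H t) (p t)
        - (⟪q t, toEuclideanLin (H t) (q t)⟫_ℝ + ⟪p t, toEuclideanLin (H t) (p t)⟫_ℝ) • p t)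
    (heq2 : ∀ t, ε • p' t =
      -((2 - ⟪q t, q t⟫_ℝ - ⟪p t, p t⟫_ℝ) • toEuclideanLin (H t) (q t))
        + (⟪q t, toEuclideanLin (H t) (q t)⟫_ℝ + ⟪p t, toEuclideanLin (H t) (p t)⟫_ℝ) • q t)
    (hinit : ⟪q 0, q 0⟫_ℝ + ⟪p 0, p 0⟫_ℝ = 1) :
    ∀ t : ℝ,
      ⟪q t, q t⟫_ℝ + ⟪p t, p t⟫_ℝ = 1 ∧
      (let φ : ℝ → EuclideanSpace ℂ (Fin d) := fun s => WithLp.toLp 2 (fun i => (q s i : ℂ) + Complex.I * (p s i : ℂ))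
       let φd : EuclideanSpace ℂ (Fin d) := WithLp.toLp 2 (fun i => (q' t i : ℂ) + Complex.I * (p' t i : ℂ))
       let Hc : Matrix (Fin d) (Fin d) ℂ := (H t).map (fun a => (a : ℂ))
       HasDerivAt φ φd t ∧
       (Complex.I * ε) • φd =
         toEuclideanLin Hc (φ t) - ⟪φ t, toEuclideanLin Hc (φ t)⟫_ℂ • φ t) := by
  have heq : ∀ t, ε • (q' t, p' t) = ptHamiltonianField (H t) (q t) (p t) :=
    fun t => Prod.ext (heq1 t) (heq2 t)
  intro t
  have hnorm : ⟪q t, q t⟫_ℝ + ⟪p t, p t⟫_ℝ = 1 :=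
    (inner_self_add_inner_self_eq_of_hamiltonian hε.ne' hsym hq hp heq t).trans hinit
  refine ⟨hnorm, complexify.hasFDerivAt.comp_hasDerivAt t ((hq t).prodMk (hp t)), ?_⟩
  change (Complex.I * ε) • complexify (q' t, p' t) = _
  rw [mul_smul, Complex.coe_smul, ← map_smul, heq t]
  exact I_smul_complexify_ptHamiltonianField (hsym t) hnorm

/-- The Hamiltonian form of the parallel transport dynamics: if `(q, p)` solves the
Hamiltonian system with normalized initial condition, then `qᵀq + pᵀp = 1` for all `t`
and `φ = q + i p` solves the parallel transport dynamics. -/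
theorem stmt_8 {d : ℕ} (ε : ℝ) (hε : 0 < ε)
    (H : ℝ → Matrix (Fin d) (Fin d) ℝ)
    (hHc : Continuous H)
    (hsym : ∀ t, (H t).IsSymm)
    (q p q' p' : ℝ → EuclideanSpace ℝ (Fin d))
    (hq : ∀ t, HasDerivAt q (q' t) t)
    (hp : ∀ t, HasDerivAt p (p' t) t)
    (heq1 : ∀ t, ε • q' t =
      (2 - ⟪q t, q t⟫_ℝ - ⟪p t, p t⟫_ℝ) • toEuclideanLin (H t) (p t)
        - (⟪q t, toEuclideanLin (H t) (q t)⟫_ℝ + ⟪p t, toEuclideanLin (H t) (p t)⟫_ℝ) • p t)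
    (heq2 : ∀ t, ε • p' t =
      -((2 - ⟪q t, q t⟫_ℝ - ⟪p t, p t⟫_ℝ) • toEuclideanLin (H t) (q t))
        + (⟪q t, toEuclideanLin (H t) (q t)⟫_ℝ + ⟪p t, toEuclideanLin (H t) (p t)⟫_ℝ) • q t)
    (hinit : ⟪q 0, q 0⟫_ℝ + ⟪p 0, p 0⟫_ℝ = 1) :
    ∀ t : ℝ,
      ⟪q t, q t⟫_ℝ + ⟪p t, p t⟫_ℝ = 1 ∧
      (let φ : ℝ → EuclideanSpace ℂ (Fin d) := fun s => WithLp.toLp 2 (fun i => (q s i : ℂ) + Complex.I * (p s i : ℂ))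
       let φd : EuclideanSpace ℂ (Fin d) := WithLp.toLp 2 (fun i => (q' t i : ℂ) + Complex.I * (p' t i : ℂ))
       let Hc : Matrix (Fin d) (Fin d) ℂ := (H t).map (fun a => (a : ℂ))
       HasDerivAt φ φd t ∧
       (Complex.I * ε) • φd =
         toEuclideanLin Hc (φ t) - ⟪φ t, toEuclideanLin Hc (φ t)⟫_ℂ • φ t) :=
  stmt_8_general ε hε H hsym q p q' p' hq hp heq1 heq2 hinit
end

section
/- Let H : [0,T] → Matrix (Fin d) (Fin d) ℂ be an infinitely differentiable family of Hermitian matrices such that ‖H^{(k)}(t)‖ is bounded uniformly in t ∈ [0,T] for every k ≥ 0. Suppose there is a continuous function λ : [0,T] → ℝ such that λ(t) is a simple eigenvalue of H(t) and dist(λ(t), spec(H(t)) ∖ {λ(t)}) ≥ Δ for some Δ > 0 and all t ∈ [0,T]. Define the Riesz projector Q(t) = −(1/(2πi)) ∮_{|z−λ(t)| = Δ/2} (H(t) − z)⁻¹ dz. Then Q is infinitely differentiable on [0,T], and for every k ≥ 0 there is a constant C_k, depending only on Δ, T, and the bounds on the derivatives of H, such that ‖Q^{(k)}(t)‖ ≤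 C_k for all t ∈ [0,T]. -/
/-!
For a Hermitian matrix, the contour integral of the resolvent over a circle depends only on which
eigenvalues the circle encloses: diagonalising reduces it to the scalar integrals of `(μ - z)⁻¹`,
which are `-2πi` or `0`. For `t` near `t₀` the eigenvalue `λ(t)` stays within `Δ/2` of `λ(t₀)`
while the rest of the spectrum of `H(t)` stays farther than `Δ/2` away, so `Q(t)` is the integral
over the fixed circle `|z - λ(t₀)| = Δ/2`, that is `Q = G ∘ H` near `t₀` for a single map `G`.
Differentiating under the integral sign, `G` is smooth on the open set of matrices with no
spectrum on that circle, hence `Q` is smooth on `[0,T]`, and each derivative is bounded there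
because it is continuous on a compact interval.
-/

open scoped Matrix.Norms.L2Operator ContDiff Topology
open Matrix Set Filter Function Metric

-- `E` and `F` share a universe because the induction replaces `F` by `E →L[ℝ] F`.
universe u

section ParametricIntegral

variable {X : Type*} [TopologicalSpace X] {E F : Type u} [NormedAddCommGroup E] [NormedSpace ℝ E]
  [NormedAddCommGroup F]

theorem ContinuousOn.continuous_of_uncurry {f : X → ℝ → F} {U : Set X}
    (hf : ContinuousOn (uncurry f) (U ×ˢ univ)) {x : X} (hx : x ∈ U) : Continuous (f x) :=
  hf.comp_continuous (continuous_const.prodMk continuous_id) fun _ => ⟨hx, trivial⟩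

theorem ContinuousOn.exists_eventually_norm_le_of_isCompact {f : X → ℝ → F} {U : Set X}
    {K : Set ℝ} (hU : IsOpen U) (hK : IsCompact K) (hf : ContinuousOn (uncurry f) (U ×ˢ univ))
    {x₀ : X} (hx₀ : x₀ ∈ U) : ∃ C, ∀ᶠ x in 𝓝 x₀, ∀ θ ∈ K, ‖f x θ‖ ≤ C := by
  obtain ⟨C, hC⟩ := hK.exists_bound_of_continuousOn (hf.continuous_of_uncurry hx₀).continuousOn
  refine ⟨C + 1, hK.eventually_forall_of_forall_eventually fun θ hθ => ?_⟩
  have hcont : ContinuousAt (uncurry f) (x₀, θ) :=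
    hf.continuousAt ((hU.prod isOpen_univ).mem_nhds ⟨hx₀, trivial⟩)
  have hlt : ‖uncurry f (x₀, θ)‖ < C + 1 := (hC θ hθ).trans_lt (lt_add_one C)
  filter_upwards [hcont.norm.eventually (gt_mem_nhds hlt)] with z hz
  exact hz.le

variable [NormedSpace ℝ F]

theorem hasFDerivAt_intervalIntegral_of_contDiffOn {f : E → ℝ → F} {U : Set E} (hU : IsOpen U)
    (hf : ContDiffOn ℝ 1 (uncurry f) (U ×ˢ univ)) (a b : ℝ) {x₀ : E} (hx₀ : x₀ ∈ U) :
    HasFDerivAt (fun x => ∫ θ in a..b, f x θ)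
      (∫ θ in a..b, fderiv ℝ (uncurry f) (x₀, θ) ∘L .inl ℝ E ℝ) x₀ := by
  have hUo : IsOpen (U ×ˢ (univ : Set ℝ)) := hU.prod isOpen_univ
  have hf' : ContinuousOn (uncurry fun x θ => fderiv ℝ (uncurry f) (x, θ) ∘L .inl ℝ E ℝ)
      (U ×ˢ univ) :=
    (hf.continuousOn_fderiv_of_isOpen hUo le_rfl).clm_comp continuousOn_const
  obtain ⟨C, hC⟩ := hf'.exists_eventually_norm_le_of_isCompact hU isCompact_uIcc hx₀
  refine intervalIntegral.hasFDerivAt_integral_of_dominated_of_fderiv_le (bound := fun _ => C)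
    (F' := fun x θ => fderiv ℝ (uncurry f) (x, θ) ∘L .inl ℝ E ℝ)
    (hC.and (hU.mem_nhds hx₀)) ?_
    ((hf.continuousOn.continuous_of_uncurry hx₀).intervalIntegrable a b)
    (hf'.continuous_of_uncurry hx₀).aestronglyMeasurable ?_ intervalIntegrable_const ?_
  · filter_upwards [hU.mem_nhds hx₀] with x hx
    exact (hf.continuousOn.continuous_of_uncurry hx).aestronglyMeasurable
  · exact Eventually.of_forall fun θ hθ x hx => hx.1 θ (uIoc_subset_uIcc hθ)
  · refine Eventually.of_forall fun θ _ x hx => ?_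
    have hxθ : (x, θ) ∈ U ×ˢ univ := ⟨hx.2, trivial⟩
    have hd : DifferentiableAt ℝ (uncurry f) (x, θ) :=
      (hf.contDiffAt (hUo.mem_nhds hxθ)).differentiableAt one_ne_zero
    exact hd.hasFDerivAt.comp x (hasFDerivAt_prodMk_left (𝕜 := ℝ) x θ)

theorem contDiffOn_intervalIntegral_of_isOpen {f : E → ℝ → F} {U : Set E} (hU : IsOpen U)
    (hf : ContDiffOn ℝ ∞ (uncurry f) (U ×ˢ univ)) (a b : ℝ) :
    ContDiffOn ℝ ∞ (fun x => ∫ θ in a..b, f x θ) U := by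
  rw [contDiffOn_infty]
  intro n
  induction n generalizing F with
  | zero =>
    rw [Nat.cast_zero, contDiffOn_zero]
    exact fun x hx => (hasFDerivAt_intervalIntegral_of_contDiffOn hU
      (hf.of_le (by exact_mod_cast le_top)) a b hx).continuousAt.continuousWithinAt
  | succ n ih =>
    have hderiv := fun x (hx : x ∈ U) => hasFDerivAt_intervalIntegral_of_contDiffOn hU
      (hf.of_le (by exact_mod_cast le_top)) a b hx
    have hf' : ContDiffOn ℝ ∞
        (uncurry fun x θ => fderiv ℝ (uncurry f) (x, θ) ∘L .inl ℝ E ℝ) (U ×ˢ univ) :=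
      (hf.fderiv_of_isOpen (hU.prod isOpen_univ) le_rfl).clm_comp contDiffOn_const
    rw [Nat.cast_succ, contDiffOn_succ_iff_fderiv_of_isOpen hU]
    refine ⟨fun x hx => (hderiv x hx).differentiableAt.differentiableWithinAt, by simp, ?_⟩
    exact (ih hf').congr fun x hx => (hderiv x hx).fderiv

end ParametricIntegral

theorem isUnit_sub_smul_one_of_notMem_spectrum {𝕜 𝔸 : Type*} [CommRing 𝕜] [Ring 𝔸]
    [Algebra 𝕜 𝔸] {a : 𝔸} {z : 𝕜} (hz : z ∉ spectrum 𝕜 a) : IsUnit (a - z • 1) := by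
  simpa [Algebra.algebraMap_eq_smul_one] using (spectrum.notMem_iff.1 hz).neg

theorem notMem_spectrum_of_mem_sphere_of_gap {𝔸 : Type*} [Ring 𝔸] [Algebra ℂ 𝔸] {a : 𝔸}
    {lam z : ℂ} {Δ : ℝ} (hΔ : 0 < Δ) (hgap : ∀ μ ∈ spectrum ℂ a, μ ≠ lam → Δ ≤ ‖μ - lam‖)
    (hz : z ∈ sphere lam (Δ / 2)) : z ∉ spectrum ℂ a := by
  rw [mem_sphere, dist_eq_norm] at hz
  intro hspec
  by_cases hzlam : z = lam
  · rw [hzlam, sub_self, norm_zero] at hz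
    linarith
  · linarith [hgap z hspec hzlam]

section RieszIntegral

variable {𝔸 : Type u} [NormedRing 𝔸] [NormedAlgebra ℂ 𝔸] [CompleteSpace 𝔸]

theorem isOpen_setOf_forall_isUnit_sub_smul_one {K : Set ℂ} (hK : IsCompact K) :
    IsOpen {a : 𝔸 | ∀ z ∈ K, IsUnit (a - z • 1)} := by
  refine isOpen_iff_mem_nhds.2 fun a ha => hK.eventually_forall_of_forall_eventually fun z hz => ?_
  have hcont : Continuous fun p : 𝔸 × ℂ => p.1 - p.2 • (1 : 𝔸) := by fun_prop
  exact (Units.isOpen.preimage hcont).mem_nhds (ha z hz)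

theorem contDiffAt_circleIntegral_ringInverse {a₀ : 𝔸} {c : ℂ} {R : ℝ} (hR : 0 ≤ R)
    (ha₀ : ∀ z ∈ sphere c R, IsUnit (a₀ - z • 1)) :
    ContDiffAt ℝ ∞ (fun a => ∮ z in C(c, R), Ring.inverse (a - z • 1)) a₀ := by
  set U := {a : 𝔸 | ∀ z ∈ sphere c R, IsUnit (a - z • 1)}
  have hU : IsOpen U := isOpen_setOf_forall_isUnit_sub_smul_one (isCompact_sphere c R)
  refine (contDiffOn_intervalIntegral_of_isOpen hU ?_ 0 (2 * Real.pi)).contDiffAt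
    (hU.mem_nhds ha₀)
  rintro ⟨a, θ⟩ ⟨ha, -⟩
  have hunit : IsUnit (a - circleMap c R θ • 1) := ha _ (circleMap_mem_sphere c hR θ)
  have hderiv : ContDiff ℝ ∞ (deriv (circleMap c R)) := by
    rw [show deriv (circleMap c R) = _ from funext (deriv_circleMap c R)]
    exact (contDiff_circleMap 0 R).mul contDiff_const
  have hinv : ContDiffAt ℝ ∞ (fun p : 𝔸 × ℝ => Ring.inverse (p.1 - circleMap c R p.2 • 1))
      (a, θ) := by
    refine ContDiffAt.comp (g := Ring.inverse) _ ?_ ?_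
    · simpa [hunit.unit_spec] using contDiffAt_ringInverse ℝ hunit.unit
    · exact (contDiff_fst.sub (((contDiff_circleMap c R).comp contDiff_snd).smul
        contDiff_const)).contDiffAt
  exact ((hderiv.comp contDiff_snd).contDiffAt.smul hinv).contDiffWithinAt

end RieszIntegral

section CircleIntegral

variable {c w : ℂ} {R : ℝ}

theorem circleIntegral_inv_sub_of_mem_ball (hw : w ∈ ball c R) :
    (∮ z in C(c, R), (w - z)⁻¹) = -(2 * Real.pi * Complex.I) := by
  have hR : 0 ≤ R := dist_nonneg.trans (mem_ball.1 hw).le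
  rw [circleIntegral.integral_congr hR (g := fun z => -1 * (z - w)⁻¹) fun z _ => by
      simp only [neg_one_mul, ← inv_neg, neg_sub], circleIntegral.integral_const_mul,
    circleIntegral.integral_sub_inv_of_mem_ball hw, neg_one_mul]

theorem circleIntegral_inv_sub_of_notMem_closedBall (hR : 0 ≤ R) (hw : w ∉ closedBall c R) :
    (∮ z in C(c, R), (w - z)⁻¹) = 0 := by
  refine DifferentiableOn.diffContOnCl ?_ |>.circleIntegral_eq_zero hR
  refine (differentiableOn_const w |>.sub differentiableOn_id).inv fun z hz h => hw ?_
  rw [Pi.sub_apply, sub_eq_zero] at h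
  rw [h]
  exact closure_ball_subset_closedBall hz

end CircleIntegral

namespace Matrix.IsHermitian

variable {n : Type*} [Fintype n] [DecidableEq n] {A : Matrix n n ℂ}

noncomputable def eigenprojection (hA : A.IsHermitian) (i : n) : Matrix n n ℂ :=
  Unitary.conjStarAlgAut ℂ _ hA.eigenvectorUnitary (single i i 1)

theorem sub_smul_one_inv_eq_sum (hA : A.IsHermitian) {z : ℂ}
    (hz : ∀ i, (hA.eigenvalues i : ℂ) ≠ z) :
    (A - z • 1)⁻¹ = ∑ i, ((hA.eigenvalues i : ℂ) - z)⁻¹ • hA.eigenprojection i := by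
  set φ := Unitary.conjStarAlgAut ℂ (Matrix n n ℂ) hA.eigenvectorUnitary
  have hsum : ∀ v : n → ℂ, ∑ i, v i • hA.eigenprojection i = φ (diagonal v) := fun v => by
    simp only [eigenprojection, ← map_smul, ← map_sum, smul_single, smul_eq_mul, mul_one,
      sum_single_eq_diagonal, φ]
  have hdiag : A - z • 1 = φ (diagonal fun i => (hA.eigenvalues i : ℂ) - z) := by
    conv_lhs => rw [hA.spectral_theorem]
    rw [← map_one φ, ← map_smul, ← map_sub, ← diagonal_one, ← diagonal_smul, diagonal_sub]
    congr 2
    funext i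
    simp
  rw [hsum, hdiag]
  refine inv_eq_right_inv ?_
  rw [← map_mul, diagonal_mul_diagonal, ← map_one φ, ← diagonal_one]
  congr 2
  exact funext fun i => mul_inv_cancel₀ (sub_ne_zero.2 (hz i))

theorem circleIntegral_sub_smul_one_inv (hA : A.IsHermitian) {c : ℂ} {R : ℝ} (hR : 0 ≤ R)
    (hsphere : ∀ i, (hA.eigenvalues i : ℂ) ∉ sphere c R) :
    (∮ z in C(c, R), (A - z • 1)⁻¹) =
      ∑ i, (∮ z in C(c, R), ((hA.eigenvalues i : ℂ) - z)⁻¹) • hA.eigenprojection i := by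
  rw [circleIntegral.integral_congr hR fun z hz =>
    hA.sub_smul_one_inv_eq_sum fun i h => hsphere i (h ▸ hz)]
  rw [circleIntegral.integral_fun_sum fun i _ => ?_]
  · simp only [circleIntegral.integral_smul_const]
  refine ContinuousOn.circleIntegrable hR ?_
  have hcont : ContinuousOn (fun z => (hA.eigenvalues i : ℂ) - z) (sphere c R) := by fun_prop
  exact (hcont.inv₀ fun z hz h => hsphere i (sub_eq_zero.1 h ▸ hz)).smul continuousOn_const

theorem circleIntegral_sub_smul_one_inv_eq (hA : A.IsHermitian) {c c' : ℂ} {R R' : ℝ}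
    (hR : 0 ≤ R) (hR' : 0 ≤ R')
    (hspec : ∀ μ ∈ spectrum ℂ A, (μ ∈ ball c R ∧ μ ∈ ball c' R') ∨
      (μ ∉ closedBall c R ∧ μ ∉ closedBall c' R')) :
    (∮ z in C(c, R), (A - z • 1)⁻¹) = ∮ z in C(c', R'), (A - z • 1)⁻¹ := by
  have hev : ∀ i, (hA.eigenvalues i : ℂ) ∈ spectrum ℂ A := fun i => by
    rw [hA.spectrum_eq_image_range]
    exact ⟨_, mem_range_self i, rfl⟩
  have hnot_sphere : ∀ {c R} i, ((hA.eigenvalues i : ℂ) ∈ ball c R ∨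
      (hA.eigenvalues i : ℂ) ∉ closedBall c R) → (hA.eigenvalues i : ℂ) ∉ sphere c R := by
    rintro c R i (h | h) hs
    · exact (ne_of_lt (mem_ball.1 h)) (mem_sphere.1 hs)
    · exact h (sphere_subset_closedBall hs)
  rw [hA.circleIntegral_sub_smul_one_inv hR fun i => hnot_sphere i ?_,
    hA.circleIntegral_sub_smul_one_inv hR' fun i => hnot_sphere i ?_]
  · refine Finset.sum_congr rfl fun i _ => ?_
    rcases hspec _ (hev i) with ⟨h, h'⟩ | ⟨h, h'⟩
    · rw [circleIntegral_inv_sub_of_mem_ball h, circleIntegral_inv_sub_of_mem_ball h']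
    · rw [circleIntegral_inv_sub_of_notMem_closedBall hR h,
        circleIntegral_inv_sub_of_notMem_closedBall hR' h']
  · exact (hspec _ (hev i)).imp And.right And.right
  · exact (hspec _ (hev i)).imp And.left And.left

theorem circleIntegral_sub_smul_one_inv_eq_of_gap (hA : A.IsHermitian) {lam c : ℂ} {Δ : ℝ}
    (hgap : ∀ μ ∈ spectrum ℂ A, μ ≠ lam → Δ ≤ ‖μ - lam‖) (hc : ‖c - lam‖ < Δ / 2) :
    (∮ z in C(c, Δ / 2), (A - z • 1)⁻¹) = ∮ z in C(lam, Δ / 2), (A - z • 1)⁻¹ := by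
  have hΔ : 0 < Δ / 2 := (norm_nonneg _).trans_lt hc
  refine hA.circleIntegral_sub_smul_one_inv_eq hΔ.le hΔ.le fun μ hμ => ?_
  by_cases hμlam : μ = lam
  · subst hμlam
    exact .inl ⟨by rwa [mem_ball, dist_comm, dist_eq_norm], mem_ball_self hΔ⟩
  · have hfar := hgap μ hμ hμlam
    refine .inr ⟨fun h => ?_, fun h => ?_⟩
    · rw [mem_closedBall, dist_eq_norm] at h
      linarith [norm_sub_le_norm_sub_add_norm_sub μ c lam]
    · rw [mem_closedBall, dist_eq_norm] at h
      linarith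

end Matrix.IsHermitian

theorem stmt_11_general {d : ℕ} (T Δ : ℝ) (hT : 0 < T) (hΔ : 0 < Δ)
    (H : ℝ → Matrix (Fin d) (Fin d) ℂ)
    (hsm : ContDiffOn ℝ ∞ H (Icc 0 T))
    (hherm : ∀ t ∈ Icc (0:ℝ) T, (H t).IsHermitian)
    (lam : ℝ → ℝ) (hlam : ContinuousOn lam (Icc 0 T))
    (hgap : ∀ t ∈ Icc (0:ℝ) T, ∀ μ ∈ spectrum ℂ (H t), μ ≠ (lam t : ℂ) →
      Δ ≤ ‖μ - (lam t : ℂ)‖)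
    (Q : ℝ → Matrix (Fin d) (Fin d) ℂ)
    (hQ : ∀ t, Q t = (-(2 * Real.pi * Complex.I)⁻¹) •
      (∮ z in C((lam t : ℂ), Δ / 2), (H t - z • 1)⁻¹)) :
    ContDiffOn ℝ ∞ Q (Icc 0 T) ∧
    ∀ k : ℕ, ∃ C : ℝ, ∀ t ∈ Icc (0:ℝ) T, ‖iteratedDerivWithin k Q (Icc 0 T) t‖ ≤ C := by
  have hQ_smooth : ContDiffOn ℝ ∞ Q (Icc 0 T) := by
    intro t₀ ht₀
    set G := fun A : Matrix (Fin d) (Fin d) ℂ =>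
      (-(2 * Real.pi * Complex.I)⁻¹) • ∮ z in C((lam t₀ : ℂ), Δ / 2), (A - z • 1)⁻¹
    have hG : ContDiffAt ℝ ∞ G (H t₀) := by
      simp only [G, nonsing_inv_eq_ringInverse]
      exact (contDiffAt_circleIntegral_ringInverse (half_pos hΔ).le fun z hz =>
        isUnit_sub_smul_one_of_notMem_spectrum
          (notMem_spectrum_of_mem_sphere_of_gap hΔ (hgap t₀ ht₀) hz)).const_smul _
    have hQG : Q =ᶠ[𝓝[Icc 0 T] t₀] G ∘ H := by
      filter_upwards [self_mem_nhdsWithin, hlam t₀ ht₀ (ball_mem_nhds _ (half_pos hΔ))]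
        with t ht hclose
      have hc : ‖(lam t₀ : ℂ) - lam t‖ < Δ / 2 := by
        rwa [← Complex.ofReal_sub, Complex.norm_real, ← dist_eq_norm, dist_comm]
      rw [hQ, ← (hherm t ht).circleIntegral_sub_smul_one_inv_eq_of_gap (hgap t ht) hc]
      rfl
    exact (hG.comp_contDiffWithinAt t₀ (hsm t₀ ht₀)).congr_of_eventuallyEq hQG (hQ t₀)
  refine ⟨hQ_smooth, fun k => ?_⟩
  exact isCompact_Icc.exists_bound_of_continuousOn
    (hQ_smooth.continuousOn_iteratedDerivWithin (by exact_mod_cast le_top) (uniqueDiffOn_Icc hT))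

/-- Smoothness and `ε`-independent bounds for all derivatives of the Riesz spectral
projector `Q(t)` associated with a gapped simple eigenvalue `λ(t)` of a smooth,
uniformly bounded Hermitian family `H(t)`. -/
theorem stmt_11 {d : ℕ} (T Δ : ℝ) (hT : 0 < T) (hΔ : 0 < Δ)
    (H : ℝ → Matrix (Fin d) (Fin d) ℂ)
    (hsm : ContDiffOn ℝ ∞ H (Icc 0 T))
    (hherm : ∀ t ∈ Icc (0:ℝ) T, (H t).IsHermitian)
    (hbd : ∀ k : ℕ, ∃ M : ℝ, ∀ t ∈ Icc (0:ℝ) T, ‖iteratedDerivWithin k H (Icc 0 T) t‖ ≤ M)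
    (lam : ℝ → ℝ) (hlam : ContinuousOn lam (Icc 0 T))
    (heig : ∀ t ∈ Icc (0:ℝ) T, Module.End.HasEigenvalue (Matrix.toLin' (H t)) ((lam t : ℂ)))
    (hsimple : ∀ t ∈ Icc (0:ℝ) T,
      Module.finrank ℂ (Module.End.eigenspace (Matrix.toLin' (H t)) ((lam t : ℂ))) = 1)
    (hgap : ∀ t ∈ Icc (0:ℝ) T, ∀ μ ∈ spectrum ℂ (H t), μ ≠ (lam t : ℂ) →
      Δ ≤ ‖μ - (lam t : ℂ)‖)
    (Q : ℝ → Matrix (Fin d) (Fin d) ℂ)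
    (hQ : ∀ t, Q t = (-(2 * Real.pi * Complex.I)⁻¹) •
      (∮ z in C((lam t : ℂ), Δ / 2), (H t - z • 1)⁻¹)) :
    ContDiffOn ℝ ∞ Q (Icc 0 T) ∧
    ∀ k : ℕ, ∃ C : ℝ, ∀ t ∈ Icc (0:ℝ) T, ‖iteratedDerivWithin k Q (Icc 0 T) t‖ ≤ C :=
  stmt_11_general T Δ hT hΔ H hsm hherm lam hlam hgap Q hQ
end

section
/- Let ε > 0, let H : [0,T] → Matrix (Fin d) (Fin d) ℂ be a continuous family of Hermitian matrices, and let Q : [0,T] → Matrix (Fin d) (Fin d) ℂ be a continuously differentiable family of Hermitian projectors with Q(t) H(t) = H(t) Q(t) for all t. Let θ : [0,T] → ℝ be continuous, and let φ_B : [0,T] → ℂ^d solve iε ∂ₜφ_B(t) = (H(t) − θ(t) I + iε [Q̇(t), Q(t)]) φ_B(t) with Q(0) φ_B(0) = φ_B(0). Then Q(t) φ_B(t) = φ_B(t) for all t ∈ [0,T]. In particular this holds when θ(t) = φ(t)* H(t) φ(t) for the solution φ of the parallel transport dynamics. -/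
open scoped Matrix Matrix.Norms.L2Operator
open Matrix Set

/-!
Put `ψ = (Q - 1) φ_B`. Dividing the equation by `iε` gives `φ_B' = A φ_B` with
`A = (iε)⁻¹ (H - θ) + [Q̇, Q]`. Differentiating `Q² = Q` gives `Q̇Q + QQ̇ = Q̇`, hence `QQ̇Q = 0`,
and together with `[Q, H] = 0` this yields the Lax equation `Q̇ = [A, Q]`. Then `ψ` solves the same
linear equation `ψ' = A ψ` with `ψ(0) = 0`, so `ψ ≡ 0` by Grönwall's inequality.
-/

section LinearODE

variable {𝕜 E : Type*} [NontriviallyNormedField 𝕜] [NormedAddCommGroup E] [NormedSpace 𝕜 E]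
  [NormedSpace ℝ E]

theorem eqOn_zero_of_hasDerivWithinAt_clm_apply {A : ℝ → E →L[𝕜] E} {ψ : ℝ → E} {a b : ℝ}
    (hA : ContinuousOn A (Icc a b)) (hψ : ContinuousOn ψ (Icc a b))
    (hψ' : ∀ t ∈ Ico a b, HasDerivWithinAt ψ (A t (ψ t)) (Ici t) t) (ha : ψ a = 0) :
    EqOn ψ 0 (Icc a b) := by
  obtain ⟨C, hC⟩ := isCompact_Icc.exists_bound_of_continuousOn hA
  exact eq_zero_of_abs_deriv_le_mul_abs_self_of_eq_zero_right (K := C) hψ hψ' ha fun t ht =>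
    (A t).le_of_opNorm_le (hC t (Ico_subset_Icc_self ht)) _

variable [NormedAlgebra ℝ 𝕜] [IsScalarTower ℝ 𝕜 E] {A P : ℝ → E →L[𝕜] E} {P' : E →L[𝕜] E}
  {u : ℝ → E} {u' : E} {s : Set ℝ} {t : ℝ}

theorem HasDerivWithinAt.clm_apply_of_isScalarTower (hP : HasDerivWithinAt P P' s t)
    (hu : HasDerivWithinAt u u' s t) :
    HasDerivWithinAt (fun r => P r (u r)) (P' (u t) + P t u') s t := by
  have := ((isBoundedBilinearMap_apply (𝕜 := 𝕜) (E := E) (F := E)).hasFDerivAt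
    (P t, u t)).restrictScalars ℝ |>.comp_hasDerivWithinAt t (hP.prodMk hu)
  simpa [Function.comp_def, add_comm] using this

theorem HasDerivWithinAt.clm_apply_of_commutator
    (hP : HasDerivWithinAt P (A t * P t - P t * A t) s t)
    (hu : HasDerivWithinAt u (A t (u t)) s t) :
    HasDerivWithinAt (fun r => P r (u r)) (A t (P t (u t))) s t := by
  convert hP.clm_apply_of_isScalarTower hu using 1
  simp

theorem clm_apply_eqOn_zero_of_hasDerivWithinAt_commutator {P' : ℝ → E →L[𝕜] E} {a b : ℝ}
    (hA : ContinuousOn A (Icc a b))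
    (hu : ∀ t ∈ Icc a b, HasDerivWithinAt u (A t (u t)) (Icc a b) t)
    (hP : ∀ t ∈ Icc a b, HasDerivWithinAt P (P' t) (Icc a b) t)
    (hP' : ∀ t ∈ Ico a b, P' t = A t * P t - P t * A t) (ha : P a (u a) = 0) :
    EqOn (fun t => P t (u t)) 0 (Icc a b) := by
  refine eqOn_zero_of_hasDerivWithinAt_clm_apply hA
    (fun t ht => ((hP t ht).clm_apply_of_isScalarTower (hu t ht)).continuousWithinAt)
    (fun t ht => ?_) ha
  have ht' := Ico_subset_Icc_self ht
  exact (((hP' t ht ▸ hP t ht').clm_apply_of_commutator (hu t ht')).mono_of_mem_nhdsWithin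
    (Icc_mem_nhdsGE_of_mem ht))

end LinearODE

theorem IsIdempotentElem.eq_commutator_of_mul_add_mul_eq {R : Type*} [Ring R] {q q' h : R}
    (hq : IsIdempotentElem q) (hq' : q' * q + q * q' = q') (hqh : Commute q h) :
    q' = (h + (q' * q - q * q')) * q - q * (h + (q' * q - q * q')) := by
  have hqq'q : q * q' * q = 0 := by
    have := congrArg (q * ·) hq'
    simp only [mul_add, ← mul_assoc, hq.eq] at this
    simpa using this
  have hq'qq : q' * q * q = q' * q := by rw [mul_assoc, hq.eq]
  calc q' = q' * q + q * q' := hq'.symm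
    _ = _ := by
      simp only [add_mul, sub_mul, mul_add, mul_sub, hq'qq, hqq'q, ← mul_assoc, hq.eq, hqh.eq]
      abel

theorem HasDerivWithinAt.eq_commutator_of_isIdempotentElem {𝔸 : Type*} [NormedRing 𝔸]
    [NormedAlgebra ℝ 𝔸] {Q : ℝ → 𝔸} {Q' h : 𝔸} {s : Set ℝ} {t : ℝ}
    (hQ : HasDerivWithinAt Q Q' s t) (hidem : ∀ r ∈ s, IsIdempotentElem (Q r)) (ht : t ∈ s)
    (hs : UniqueDiffWithinAt ℝ s t) (hQh : Commute (Q t) h) :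
    Q' = (h + (Q' * Q t - Q t * Q')) * Q t - Q t * (h + (Q' * Q t - Q t * Q')) := by
  have hQ' : Q' * Q t + Q t * Q' = Q' :=
    hs.eq_deriv _ (hQ.mul hQ) (hQ.congr (fun r hr => (hidem r hr).eq) (hidem t ht).eq)
  exact (hidem t ht).eq_commutator_of_mul_add_mul_eq hQ' hQh

section EuclideanCLM

variable {n : Type*} [Fintype n] [DecidableEq n]

theorem Matrix.continuous_toEuclideanCLM : Continuous (toEuclideanCLM (n := n) (𝕜 := ℂ)) :=
  (AddMonoidHomClass.isometry_of_norm _ fun _ => rfl).continuous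

theorem HasDerivWithinAt.matrix_toEuclideanCLM {M : ℝ → Matrix n n ℂ} {M' : Matrix n n ℂ}
    {s : Set ℝ} {t : ℝ} (h : HasDerivWithinAt M M' s t) :
    HasDerivWithinAt (fun r => toEuclideanCLM (n := n) (𝕜 := ℂ) (M r))
      (toEuclideanCLM (n := n) (𝕜 := ℂ) M') s t :=
  let L : Matrix n n ℂ →L[ℝ] (EuclideanSpace ℂ n →L[ℂ] EuclideanSpace ℂ n) :=
    ⟨(toEuclideanCLM (n := n) (𝕜 := ℂ)).toAlgEquiv.toLinearEquiv.toLinearMap.restrictScalars ℝ,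
      Matrix.continuous_toEuclideanCLM⟩
  L.hasFDerivAt.comp_hasDerivWithinAt t h

end EuclideanCLM

theorem stmt_13_general {d : ℕ} (T ε : ℝ) (hε : 0 < ε)
    (H : ℝ → Matrix (Fin d) (Fin d) ℂ)
    (hHc : ContinuousOn H (Icc 0 T))
    (Q Q' : ℝ → Matrix (Fin d) (Fin d) ℂ)
    (hQ : ∀ t ∈ Icc (0:ℝ) T, HasDerivWithinAt Q (Q' t) (Icc 0 T) t)
    (hQ'c : ContinuousOn Q' (Icc 0 T))
    (hproj : ∀ t ∈ Icc (0:ℝ) T, Q t * Q t = Q t)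
    (hcomm : ∀ t ∈ Icc (0:ℝ) T, Q t * H t = H t * Q t)
    (θ : ℝ → ℝ) (hθ : ContinuousOn θ (Icc 0 T))
    (φB φB' : ℝ → EuclideanSpace ℂ (Fin d))
    (hderiv : ∀ t ∈ Icc (0:ℝ) T, HasDerivWithinAt φB (φB' t) (Icc 0 T) t)
    (hODE : ∀ t ∈ Icc (0:ℝ) T, (Complex.I * ε) • φB' t =
      toEuclideanLin
        (H t - (θ t : ℂ) • 1 + (Complex.I * ε) • (Q' t * Q t - Q t * Q' t)) (φB t))
    (hinit : toEuclideanLin (Q 0) (φB 0) = φB 0) :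
    ∀ t ∈ Icc (0:ℝ) T, toEuclideanLin (Q t) (φB t) = φB t := by
  have hiε : Complex.I * ε ≠ 0 := by simp [hε.ne']
  let L := toEuclideanCLM (𝕜 := ℂ) (n := Fin d)
  have hL : ∀ M x, L M x = toEuclideanLin M x := fun _ _ => rfl
  set A : ℝ → Matrix (Fin d) (Fin d) ℂ :=
    fun t => (Complex.I * ε)⁻¹ • (H t - (θ t : ℂ) • 1) + (Q' t * Q t - Q t * Q' t)
  have hφB : ∀ t ∈ Icc (0:ℝ) T, HasDerivWithinAt φB (L (A t) (φB t)) (Icc 0 T) t := by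
    intro t ht
    convert hderiv t ht using 1
    rw [← inv_smul_smul₀ hiε (φB' t), hODE t ht, ← hL, ← _root_.smul_apply, ← map_smul,
      smul_add, smul_smul, inv_mul_cancel₀ hiε, one_smul]
  have hQ' : ∀ t ∈ Ico (0:ℝ) T, L (Q' t) = L (A t) * L (Q t - 1) - L (Q t - 1) * L (A t) := by
    intro t ht
    have ht' := Ico_subset_Icc_self ht
    rw [← map_mul, ← map_mul, ← map_sub, mul_sub, sub_mul, mul_one, one_mul,
      sub_sub_sub_cancel_right]
    exact congrArg L <| (hQ t ht').eq_commutator_of_isIdempotentElem (fun r hr => hproj r hr) ht'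
      (uniqueDiffOn_Icc (ht.1.trans_lt ht.2) t ht')
      (((show Commute (Q t) (H t) from hcomm t ht').sub_right
        ((Commute.one_right _).smul_right _)).smul_right _)
  have hQc : ContinuousOn Q (Icc 0 T) := fun t ht => (hQ t ht).continuousWithinAt
  have hzero := clm_apply_eqOn_zero_of_hasDerivWithinAt_commutator (P := fun t => L (Q t - 1))
    (Matrix.continuous_toEuclideanCLM.comp_continuousOn (by fun_prop)) hφB
    (fun t ht => ((hQ t ht).sub_const 1).matrix_toEuclideanCLM) hQ'
    (by simp [map_sub, hL, hinit])
  intro t ht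
  simpa [map_sub, hL, sub_eq_zero] using hzero ht

/-- If `Q(t)` is a `C¹` family of Hermitian projectors commuting with `H(t)`, and `φ_B`
solves `iε ∂ₜφ_B = (H − θ I + iε [Q̇, Q]) φ_B` with `Q(0) φ_B(0) = φ_B(0)`, then
`Q(t) φ_B(t) = φ_B(t)` for all `t ∈ [0,T]`. -/
theorem stmt_13 {d : ℕ} (T ε : ℝ) (hT : 0 ≤ T) (hε : 0 < ε)
    (H : ℝ → Matrix (Fin d) (Fin d) ℂ)
    (hHc : ContinuousOn H (Icc 0 T))
    (hHerm : ∀ t ∈ Icc (0:ℝ) T, (H t).IsHermitian)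
    (Q Q' : ℝ → Matrix (Fin d) (Fin d) ℂ)
    (hQ : ∀ t ∈ Icc (0:ℝ) T, HasDerivWithinAt Q (Q' t) (Icc 0 T) t)
    (hQ'c : ContinuousOn Q' (Icc 0 T))
    (hproj : ∀ t ∈ Icc (0:ℝ) T, Q t * Q t = Q t)
    (hherm : ∀ t ∈ Icc (0:ℝ) T, (Q t)ᴴ = Q t)
    (hcomm : ∀ t ∈ Icc (0:ℝ) T, Q t * H t = H t * Q t)
    (θ : ℝ → ℝ) (hθ : ContinuousOn θ (Icc 0 T))
    (φB φB' : ℝ → EuclideanSpace ℂ (Fin d))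
    (hderiv : ∀ t ∈ Icc (0:ℝ) T, HasDerivWithinAt φB (φB' t) (Icc 0 T) t)
    (hODE : ∀ t ∈ Icc (0:ℝ) T, (Complex.I * ε) • φB' t =
      toEuclideanLin
        (H t - (θ t : ℂ) • 1 + (Complex.I * ε) • (Q' t * Q t - Q t * Q' t)) (φB t))
    (hinit : toEuclideanLin (Q 0) (φB 0) = φB 0) :
    ∀ t ∈ Icc (0:ℝ) T, toEuclideanLin (Q t) (φB t) = φB t :=
  stmt_13_general T ε hε H hHc Q Q' hQ hQ'c hproj hcomm θ hθ φB φB' hderiv hODE hinit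
end

section
/- Let H : [0,T] → Matrix (Fin d) (Fin d) ℂ be an infinitely differentiable family of Hermitian matrices such that for every k ≥ 0 there is a bound M_k with ‖H^{(k)}(t)‖ ≤ M_k for all t ∈ [0,T]. For each ε ∈ (0,1], let ψ^ε solve the Schrödinger equation iε ∂ₜψ^ε(t) = H(t) ψ^ε(t) with ‖ψ^ε(0)‖ = 1. Then for every k ≥ 0 there is a constant C_k, depending only on k and the bounds M_0, …, M_k but not on ε, such that ‖(ψ^ε)^{(k+1)}(t)‖ ≤ C_k / ε^{k+1} for all t ∈ [0,T]. -/
open scoped Matrix Matrix.Norms.L2Operator InnerProductSpace ContDiff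
open Matrix Set

/-!
Since `H(t)` is Hermitian, `re ⟪ψ, ψ'⟫ = 0`, so `‖ψ^ε(t)‖ = 1` for all `t`. Writing the equation
as `ψ' = B (A t) ψ` with `B` the (norm `≤ 1`) bilinear map "matrix applied to vector" and
`A = (iε)⁻¹ H`, differentiating `m` times and applying the Leibniz rule gives
`‖ψ^{(m+1)}‖ ≤ ε⁻¹ ∑ᵢ (m choose i) M_i ‖ψ^{(m-i)}‖`, and strong induction on `m` yields
`‖ψ^{(m)}‖ ≤ C_m ε^{-m}` with `C_0 = 1`, `C_{m+1} = ∑ᵢ (m choose i) M_i C_{m-i}`, using `ε ≤ 1`.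
-/

section Unitarity

variable {E : Type*} [NormedAddCommGroup E] [InnerProductSpace ℂ E]

theorem norm_eq_of_re_inner_deriv_eq_zero {ψ ψ' : ℝ → E} {a b : ℝ}
    (hψ : ∀ t ∈ Icc a b, HasDerivWithinAt ψ (ψ' t) (Icc a b) t)
    (hre : ∀ t ∈ Icc a b, RCLike.re ⟪ψ t, ψ' t⟫_ℂ = 0) :
    ∀ t ∈ Icc a b, ‖ψ t‖ = ‖ψ a‖ := by
  have hderiv : ∀ t ∈ Icc a b, HasDerivWithinAt (fun u => ⟪ψ u, ψ u⟫_ℂ) 0 (Icc a b) t := by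
    intro t ht
    refine ((hψ t ht).inner ℂ (hψ t ht)).congr_deriv ?_
    rw [← inner_conj_symm (ψ' t) (ψ t), RCLike.add_conj, hre t ht, RCLike.ofReal_zero, mul_zero]
  have hconst := constant_of_has_deriv_right_zero
    (fun t ht => (hderiv t ht).continuousWithinAt)
    fun t ht => (hderiv t (Ico_subset_Icc_self ht)).mono_of_mem_nhdsWithin (Icc_mem_nhdsGE_of_mem ht)
  intro t ht
  have h := hconst t ht
  simp only [inner_self_eq_norm_sq_to_K] at h
  exact (pow_left_inj₀ (norm_nonneg _) (norm_nonneg _) two_ne_zero).mp (by exact_mod_cast h)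

/-- `⟪v, T v⟫ = iε ⟪v, w⟫` is real. -/
theorem re_inner_eq_zero_of_I_mul_smul_eq {T : E →ₗ[ℂ] E} (hT : T.IsSymmetric) {ε : ℝ}
    (hε : ε ≠ 0) {v w : E} (h : (Complex.I * ε) • w = T v) : RCLike.re ⟪v, w⟫_ℂ = 0 := by
  have him := hT.im_inner_self_apply v
  rw [← h, inner_smul_right] at him
  simpa [hε] using him

end Unitarity

def leibnizConst (M : ℕ → ℝ) : ℕ → ℝ
  | 0 => 1
  | m + 1 => ∑ i : Fin (m + 1), (m.choose i : ℝ) * M i * leibnizConst M (m - i)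

theorem leibnizConst_succ (M : ℕ → ℝ) (m : ℕ) :
    leibnizConst M (m + 1) =
      ∑ i ∈ Finset.range (m + 1), (m.choose i : ℝ) * M i * leibnizConst M (m - i) := by
  rw [leibnizConst,
    Fin.sum_univ_eq_sum_range fun i => (m.choose i : ℝ) * M i * leibnizConst M (m - i)]

theorem leibnizConst_nonneg {M : ℕ → ℝ} (hM : ∀ i, 0 ≤ M i) (m : ℕ) : 0 ≤ leibnizConst M m := by
  induction m using Nat.strong_induction_on with
  | _ m ih =>
    cases m with
    | zero => simp [leibnizConst]
    | succ m =>
      rw [leibnizConst_succ]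
      exact Finset.sum_nonneg fun i _ => by have := ih (m - i) (by omega); have := hM i; positivity

section LinearODE

variable {E F : Type*} [NormedAddCommGroup E] [NormedSpace ℝ E] [NormedAddCommGroup F]
  [NormedSpace ℝ F] {B : F →L[ℝ] E →L[ℝ] E} {A : ℝ → F} {ψ : ℝ → E} {s : Set ℝ}

theorem contDiffOn_of_hasDerivWithinAt_bilinear (hs : UniqueDiffOn ℝ s)
    (hA : ContDiffOn ℝ ∞ A s) (hψ : ∀ t ∈ s, HasDerivWithinAt ψ (B (A t) (ψ t)) s t) :
    ContDiffOn ℝ ∞ ψ s := by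
  refine contDiffOn_infty.mpr fun n => ?_
  induction n with
  | zero => exact contDiffOn_zero.mpr fun t ht => (hψ t ht).continuousWithinAt
  | succ n ih =>
    rw [Nat.cast_succ, contDiffOn_succ_iff_derivWithin hs]
    refine ⟨fun t ht => (hψ t ht).differentiableWithinAt, by simp, ?_⟩
    have hBA : ContDiffOn ℝ n (fun t => B (A t) (ψ t)) s :=
      (B.contDiff.comp_contDiffOn (hA.of_le (by exact_mod_cast le_top))).clm_apply ih
    exact hBA.congr fun t ht => (hψ t ht).derivWithin (hs t ht)

theorem norm_iteratedDerivWithin_succ_le_of_hasDerivWithinAt_bilinear (hs : UniqueDiffOn ℝ s)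
    (hA : ContDiffOn ℝ ∞ A s) (hψ : ∀ t ∈ s, HasDerivWithinAt ψ (B (A t) (ψ t)) s t)
    {t : ℝ} (ht : t ∈ s) (m : ℕ) :
    ‖iteratedDerivWithin (m + 1) ψ s t‖ ≤ ‖B‖ * ∑ i ∈ Finset.range (m + 1),
      (m.choose i : ℝ) * ‖iteratedDerivWithin i A s t‖ * ‖iteratedDerivWithin (m - i) ψ s t‖ := by
  have hderiv : EqOn (derivWithin ψ s) (fun u => B (A u) (ψ u)) s :=
    fun u hu => (hψ u hu).derivWithin (hs u hu)
  rw [iteratedDerivWithin_succ', iteratedDerivWithin_congr hderiv ht]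
  simpa only [norm_iteratedFDerivWithin_eq_norm_iteratedDerivWithin] using
    B.norm_iteratedFDerivWithin_le_of_bilinear hA (contDiffOn_of_hasDerivWithinAt_bilinear hs hA hψ)
      hs ht (n := m) (by exact_mod_cast le_top)

theorem norm_iteratedDerivWithin_le_leibnizConst (hs : UniqueDiffOn ℝ s)
    (hA : ContDiffOn ℝ ∞ A s) (hψ : ∀ t ∈ s, HasDerivWithinAt ψ (B (A t) (ψ t)) s t)
    (hB : ‖B‖ ≤ 1) {M : ℕ → ℝ} {r : ℝ} (hr : 1 ≤ r)
    (hAM : ∀ i, ∀ t ∈ s, ‖iteratedDerivWithin i A s t‖ ≤ r * M i)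
    (hψ1 : ∀ t ∈ s, ‖ψ t‖ ≤ 1) {t : ℝ} (ht : t ∈ s) (m : ℕ) :
    ‖iteratedDerivWithin m ψ s t‖ ≤ leibnizConst M m * r ^ m := by
  have hM : ∀ i, 0 ≤ M i := fun i =>
    nonneg_of_mul_nonneg_right ((norm_nonneg _).trans (hAM i t ht)) (by linarith)
  induction m using Nat.strong_induction_on with
  | _ m ih =>
    cases m with
    | zero => simpa [leibnizConst] using hψ1 t ht
    | succ m =>
      refine (norm_iteratedDerivWithin_succ_le_of_hasDerivWithinAt_bilinear hs hA hψ ht m).trans ?_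
      refine (mul_le_of_le_one_left (Finset.sum_nonneg fun i _ => by positivity) hB).trans ?_
      rw [leibnizConst_succ, Finset.sum_mul]
      refine Finset.sum_le_sum fun i hi => ?_
      have hi : i ≤ m := Nat.lt_succ_iff.mp (Finset.mem_range.mp hi)
      have hpow : r * r ^ (m - i) ≤ r ^ (m + 1) := by
        rw [← pow_succ']
        exact pow_le_pow_right₀ hr (by omega)
      have hC := leibnizConst_nonneg hM (m - i)
      have hMi := hM i
      have hr0 : 0 ≤ r := by linarith
      calc (m.choose i : ℝ) * ‖iteratedDerivWithin i A s t‖ * ‖iteratedDerivWithin (m - i) ψ s t‖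
          ≤ (m.choose i : ℝ) * (r * M i) * (leibnizConst M (m - i) * r ^ (m - i)) := by
            gcongr
            exacts [hAM i t ht, ih (m - i) (by omega)]
        _ = (m.choose i : ℝ) * M i * leibnizConst M (m - i) * (r * r ^ (m - i)) := by ring
        _ ≤ (m.choose i : ℝ) * M i * leibnizConst M (m - i) * r ^ (m + 1) := by gcongr

end LinearODE

section MatrixApply

variable {n : Type*} [Fintype n] [DecidableEq n]

noncomputable def matrixApplyCLM : Matrix n n ℂ →L[ℝ] EuclideanSpace ℂ n →L[ℝ] EuclideanSpace ℂ n :=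
  LinearMap.mkContinuous
    ((ContinuousLinearMap.restrictScalarsₗ ℂ (EuclideanSpace ℂ n) (EuclideanSpace ℂ n) ℝ ℝ).comp
      ((toEuclideanCLM (n := n) (𝕜 := ℂ)).toAlgEquiv.toLinearMap.restrictScalars ℝ))
    1 fun A => by simp [cstar_norm_def]

theorem norm_matrixApplyCLM_le : ‖(matrixApplyCLM : Matrix n n ℂ →L[ℝ] _)‖ ≤ 1 :=
  LinearMap.mkContinuous_norm_le _ zero_le_one _

theorem matrixApplyCLM_apply (A : Matrix n n ℂ) (v : EuclideanSpace ℂ n) :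
    matrixApplyCLM A v = toEuclideanLin A v := rfl

end MatrixApply

/-- Derivative bounds for the Schrödinger dynamics: for a smooth, uniformly bounded
Hermitian family `H(t)`, the solution of `iε ∂ₜψ = H ψ` with `‖ψ(0)‖ = 1` satisfies
`‖ψ^{(k+1)}(t)‖ ≤ C_k / ε^{k+1}` with `C_k` independent of `ε`. -/
theorem stmt_16 {d : ℕ} (T : ℝ) (hT : 0 < T)
    (H : ℝ → Matrix (Fin d) (Fin d) ℂ)
    (hsm : ContDiffOn ℝ ∞ H (Icc 0 T))
    (hherm : ∀ t ∈ Icc (0:ℝ) T, (H t).IsHermitian)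
    (M : ℕ → ℝ)
    (hbd : ∀ k : ℕ, ∀ t ∈ Icc (0:ℝ) T, ‖iteratedDerivWithin k H (Icc 0 T) t‖ ≤ M k)
    (ψ ψ' : ℝ → ℝ → EuclideanSpace ℂ (Fin d))
    (hSE : ∀ ε ∈ Ioc (0:ℝ) 1, ∀ t ∈ Icc (0:ℝ) T,
      HasDerivWithinAt (ψ ε) (ψ' ε t) (Icc 0 T) t ∧
      (Complex.I * ε) • ψ' ε t = toEuclideanLin (H t) (ψ ε t))
    (hinit : ∀ ε ∈ Ioc (0:ℝ) 1, ‖ψ ε 0‖ = 1) :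
    ∀ k : ℕ, ∃ C : ℝ, ∀ ε ∈ Ioc (0:ℝ) 1, ∀ t ∈ Icc (0:ℝ) T,
      ‖iteratedDerivWithin (k + 1) (ψ ε) (Icc 0 T) t‖ ≤ C / ε ^ (k + 1) := by
  intro k
  refine ⟨leibnizConst M (k + 1), fun ε hε t ht => ?_⟩
  have hIε : Complex.I * ε ≠ 0 := mul_ne_zero Complex.I_ne_zero (by exact_mod_cast hε.1.ne')
  set c : ℂ := (Complex.I * ε)⁻¹
  have hψ : ∀ u ∈ Icc 0 T,
      HasDerivWithinAt (ψ ε) (matrixApplyCLM ((c • H) u) (ψ ε u)) (Icc 0 T) u := by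
    intro u hu
    obtain ⟨hderiv, hSEu⟩ := hSE ε hε u hu
    convert hderiv using 1
    rw [Pi.smul_apply, matrixApplyCLM_apply, map_smul, LinearMap.smul_apply, ← hSEu, smul_smul,
      inv_mul_cancel₀ hIε, one_smul]
  have hnorm : ∀ u ∈ Icc 0 T, ‖ψ ε u‖ = 1 := fun u hu =>
    (norm_eq_of_re_inner_deriv_eq_zero (fun u hu => (hSE ε hε u hu).1)
      (fun u hu => re_inner_eq_zero_of_I_mul_smul_eq
        (isSymmetric_toEuclideanLin_iff.mpr (hherm u hu)) hε.1.ne' (hSE ε hε u hu).2) u hu).trans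
      (hinit ε hε)
  have hAM : ∀ i, ∀ u ∈ Icc 0 T, ‖iteratedDerivWithin i (c • H) (Icc 0 T) u‖ ≤ ε⁻¹ * M i := by
    intro i u hu
    rw [iteratedDerivWithin_const_smul_field, norm_smul]
    have hc : ‖c‖ = ε⁻¹ := by simp [c, abs_of_pos hε.1]
    rw [hc]
    exact mul_le_mul_of_nonneg_left (hbd i u hu) (inv_nonneg.mpr hε.1.le)
  have hbound := norm_iteratedDerivWithin_le_leibnizConst (uniqueDiffOn_Icc hT) (hsm.const_smul c)
    hψ norm_matrixApplyCLM_le (one_le_inv₀ hε.1 |>.mpr hε.2) hAM (fun u hu => (hnorm u hu).le) ht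
    (k + 1)
  rwa [inv_pow, ← div_eq_mul_inv] at hbound
end
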